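/- arXiv:2012.15141 — 2 statements merged into one kernel-verified Lean document; each statement's English description precedes it below -/
import Mathlib

section
/- Let ι: Γ → Γ' be a specialization of graphs (contraction of a set of edges), D a divisor on Γ, and μ a polarization on Γ of degree d. Then for every subset W of the vertices of Γ', one has β_{ι_*(D)}(W) = β_D(ι^{-1}(W)), where β_D(V) = deg(D|_V) - μ(V) + δ_V/2 and δ_V is the number of edges between V and its complement. In particular, if D is μ-semistable, then ι_*(D) is ι_*(μ)-semistable. -/
/-! A common framework for weighted multigraphs, divisors, flows,
subdivisions, pseudo-divisors and specializations, following
"The moduli space of quasistable spin curves". -/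

noncomputable section

/-- A finite weighted multigraph (with a reference orientation of each edge). -/
structure WGraph where
  V : Type
  E : Type
  [fintV : Fintype V]
  [decV : DecidableEq V]
  [fintE : Fintype E]
  [decE : DecidableEq E]
  src : E → V
  tgt : E → V
  w : V → ℕ

namespace WGraph

attribute [instance] WGraph.fintV WGraph.decV WGraph.fintE WGraph.decE

attribute [local instance] Classical.propDecidable

variable (G : WGraph)

/-- Degree of a vertex (loops count twice). -/
def deg (v : G.V) : ℕ :=
  (Finset.univ.filter (fun e => G.src e = v)).card +
    (Finset.univ.filter (fun e => G.tgt e = v)).card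

/-- Degree of a vertex in the edge set `A` (loops count twice). -/
def degIn (A : Finset G.E) (v : G.V) : ℕ :=
  (A.filter (fun e => G.src e = v)).card + (A.filter (fun e => G.tgt e = v)).card

/-- Canonical divisor: `K(v) = 2 w(v) - 2 + deg(v)`. -/
def K (v : G.V) : ℤ := 2 * (G.w v : ℤ) - 2 + (G.deg v : ℤ)

/-- Canonical polarization of degree `g - 1`. -/
def canPol (v : G.V) : ℚ := (G.K v : ℚ) / 2

/-- Oriented edges: `(e, true)` is `src → tgt`, `(e, false)` is the reverse. -/
abbrev OEdge := G.E × Bool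

def osrc (oe : G.OEdge) : G.V := if oe.2 then G.src oe.1 else G.tgt oe.1

def otgt (oe : G.OEdge) : G.V := if oe.2 then G.tgt oe.1 else G.src oe.1

/-- A flow is recorded by its values along the reference orientation;
`flowVal` gives its value on an oriented edge. -/
def flowVal (φ : G.E → ℤ) (oe : G.OEdge) : ℤ := if oe.2 then φ oe.1 else -φ oe.1

/-- The divisor of a flow: `Div(φ)(v) = ∑_{t(e) = v} φ(e)` over oriented edges. -/
def divOf (φ : G.E → ℤ) (v : G.V) : ℤ :=
  (∑ e : G.E, if G.tgt e = v then φ e else 0) -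
    ∑ e : G.E, if G.src e = v then φ e else 0

/-- `e` has exactly one endpoint in `W`. -/
def crossing (W : Finset G.V) (e : G.E) : Prop := (G.src e ∈ W) ≠ (G.tgt e ∈ W)

/-- Number of edges between `W` and its complement. -/
def delta (W : Finset G.V) : ℕ := (Finset.univ.filter (fun e => G.crossing W e)).card

/-- `β_D(W) = deg(D|_W) - μ(W) + δ_W / 2`. -/
def beta (μ : G.V → ℚ) (D : G.V → ℤ) (W : Finset G.V) : ℚ :=
  (∑ v ∈ W, (D v : ℚ)) - (∑ v ∈ W, μ v) + (G.delta W : ℚ) / 2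

def Semistable (μ : G.V → ℚ) (D : G.V → ℤ) : Prop :=
  ∀ W : Finset G.V, W ≠ Finset.univ → 0 ≤ G.beta μ D W

def Stable (μ : G.V → ℚ) (D : G.V → ℤ) : Prop :=
  ∀ W : Finset G.V, W ≠ Finset.univ → W.Nonempty → 0 < G.beta μ D W

def Quasistable (μ : G.V → ℚ) (v₀ : G.V) (D : G.V → ℤ) : Prop :=
  ∀ W : Finset G.V, W ≠ Finset.univ →
    (0 ≤ G.beta μ D W ∧ (v₀ ∈ W → 0 < G.beta μ D W))

/-- An oriented cycle: a nonempty cyclically closed chain of oriented edges,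
with pairwise distinct underlying edges and pairwise distinct vertices. -/
def IsOrientedCycle (c : List G.OEdge) : Prop :=
  c ≠ [] ∧ (c.map Prod.fst).Nodup ∧ (c.map G.osrc).Nodup ∧
    ∀ i : Fin c.length,
      G.otgt (c.get i) = G.osrc (c.get ⟨((i : ℕ) + 1) % c.length, Nat.mod_lt _ i.pos⟩)

/-- A flow is acyclic if there is no oriented cycle on which it is
nonnegative and somewhere positive. -/
def Acyclic (φ : G.E → ℤ) : Prop :=
  ¬∃ c : List G.OEdge, G.IsOrientedCycle c ∧ (∀ oe ∈ c, 0 ≤ G.flowVal φ oe) ∧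
      ∃ oe ∈ c, 0 < G.flowVal φ oe

/-- Adjacency through an edge of `A`. -/
def adjVia (A : Finset G.E) (a b : G.V) : Prop :=
  ∃ e ∈ A, (G.src e = a ∧ G.tgt e = b) ∨ (G.src e = b ∧ G.tgt e = a)

/-- Reachability using only edges of `A`. -/
def ReachVia (A : Finset G.E) : G.V → G.V → Prop := Relation.ReflTransGen (G.adjVia A)

def Connected : Prop := Nonempty G.V ∧ ∀ u v : G.V, G.ReachVia Finset.univ u v

/-- A cyclic subgraph: a set of edges in which every vertex has even degree. -/
def IsCyclicSubgraph (P : Finset G.E) : Prop := ∀ v : G.V, Even (G.degIn P v)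

/-- The characteristic flow of a vertex. -/
def charFlow (v₀ : G.V) (e : G.E) : ℤ :=
  if G.src e = v₀ ∧ G.tgt e ≠ v₀ then 1
  else if G.tgt e = v₀ ∧ G.src e ≠ v₀ then -1 else 0

/-- `Div(v₀)`, the principal divisor attached to a vertex. -/
def DivV (v₀ : G.V) : G.V → ℤ := G.divOf (G.charFlow v₀)

/-- Principal divisors are integer combinations of the `Div(v)`. -/
def Principal (D : G.V → ℤ) : Prop :=
  ∃ a : G.V → ℤ, ∀ v, D v = ∑ u : G.V, a u * G.DivV u v

/-- Number of connected components of the subgraph with all vertices and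
edge set `A`. -/
def numComponents (A : Finset G.E) : ℕ :=
  (Finset.univ.image (fun v => Finset.univ.filter (fun u => G.ReachVia A v u))).card

/-- The subdivision `Γ^S`: one exceptional vertex inserted in each edge of `S`. -/
def subdiv (S : Finset G.E) : WGraph where
  V := G.V ⊕ {e // e ∈ S}
  E := {e // e ∉ S} ⊕ {e // e ∈ S} × Bool
  src := fun x =>
    match x with
    | .inl e => .inl (G.src e.1)
    | .inr (e, b) => if b then .inr e else .inl (G.src e.1)
  tgt := fun x =>
    match x with
    | .inl e => .inl (G.tgt e.1)
    | .inr (e, b) => if b then .inl (G.tgt e.1) else .inr e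
  w := fun v =>
    match v with
    | .inl v => G.w v
    | .inr _ => 0

/-- A pseudo-divisor: value `-1` on every exceptional vertex. -/
def IsPseudoDivisor (S : Finset G.E) (D : (G.subdiv S).V → ℤ) : Prop :=
  ∀ x : {e // e ∈ S}, D (Sum.inr x) = -1

/-- A pseudo-root: `2 D + Div(φ) = K_{Γ^S}` for some acyclic flow `φ` on `Γ^S`. -/
def IsPseudoRoot (S : Finset G.E) (D : (G.subdiv S).V → ℤ) : Prop :=
  G.IsPseudoDivisor S D ∧
    ∃ φ : (G.subdiv S).E → ℤ, (G.subdiv S).Acyclic φ ∧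
      ∀ v, 2 * D v + (G.subdiv S).divOf φ v = (G.subdiv S).K v

/-- Semistability of a pseudo-divisor: semistability on the subdivision with
respect to the (extended) canonical polarization. -/
def IsSemistablePR (S : Finset G.E) (D : (G.subdiv S).V → ℤ) : Prop :=
  (G.subdiv S).Semistable (G.subdiv S).canPol D

/-- `β_{E,D}` for pseudo-divisors, on subsets of the original vertices. -/
def betaPoly (S : Finset G.E) (D : (G.subdiv S).V → ℤ) (W : Finset G.V) : ℚ :=
  (∑ v ∈ W, (D (Sum.inl v) : ℚ)) -
    (∑ v ∈ W, (G.canPol v + (G.degIn S v : ℚ) / 2)) +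
    ((Finset.univ.filter (fun e => e ∉ S ∧ G.crossing W e)).card : ℚ) / 2

/-- Polystability of a pseudo-divisor. -/
def IsPolystable (S : Finset G.E) (D : (G.subdiv S).V → ℤ) : Prop :=
  ∀ W : Finset G.V,
    0 ≤ G.betaPoly S D W ∧ ((∃ e, e ∉ S ∧ G.crossing W e) → 0 < G.betaPoly S D W)

/-- The divisor `D_P` attached to a cyclic subgraph `P`, on `Γ^{E_P}` with
`E_P = Pᶜ`. -/
def DP (P : Finset G.E) : (G.subdiv Pᶜ).V → ℤ := fun x =>
  match x with
  | .inl v => (G.deg v : ℤ) - (G.degIn P v : ℤ) / 2 - 1 + (G.w v : ℤ)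
  | .inr _ => -1

/-- The data of a semistable root-graph together with its acyclic flow. -/
def IsSemistableRootTriple (S : Finset G.E) (D : (G.subdiv S).V → ℤ)
    (φ : (G.subdiv S).E → ℤ) : Prop :=
  G.IsPseudoDivisor S D ∧ G.IsSemistablePR S D ∧ (G.subdiv S).Acyclic φ ∧
    ∀ v, 2 * D v + (G.subdiv S).divOf φ v = (G.subdiv S).K v

/-- The induced subgraph on a vertex set `W`. -/
def induce (W : Finset G.V) : WGraph where
  V := {v // v ∈ W}
  E := {e // G.src e ∈ W ∧ G.tgt e ∈ W}
  src := fun e => ⟨G.src e.1, e.2.1⟩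
  tgt := fun e => ⟨G.tgt e.1, e.2.2⟩
  w := fun v => G.w v.1

/-- Number of edges between `W` and `Wᶜ` incident to `v`. -/
def degCross (W : Finset G.V) (v : G.V) : ℕ :=
  (Finset.univ.filter (fun e => G.src e = v ∧ G.crossing W e)).card +
    (Finset.univ.filter (fun e => G.tgt e = v ∧ G.crossing W e)).card

/-- A specialization (iterated edge contraction) of weighted graphs. -/
structure Spec (G G' : WGraph) where
  vmap : G.V → G'.V
  emap : G'.E → G.E
  emap_inj : Function.Injective emap
  vmap_surj : Function.Surjective vmap
  src_comm : ∀ e', vmap (G.src (emap e')) = G'.src e'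
  tgt_comm : ∀ e', vmap (G.tgt (emap e')) = G'.tgt e'
  contract_eq : ∀ e : G.E, e ∉ Finset.univ.image emap → vmap (G.src e) = vmap (G.tgt e)
  fiber_conn : ∀ u v : G.V, vmap u = vmap v →
    Relation.ReflTransGen
      (fun a b => ∃ e, e ∉ Finset.univ.image emap ∧
        ((G.src e = a ∧ G.tgt e = b) ∨ (G.src e = b ∧ G.tgt e = a))) u v
  weight_eq : ∀ v' : G'.V,
    (G'.w v' : ℤ) =
      (∑ v ∈ Finset.univ.filter (fun v => vmap v = v'), (G.w v : ℤ)) +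
        ((Finset.univ.filter (fun e : G.E =>
            e ∉ Finset.univ.image emap ∧ vmap (G.src e) = v')).card : ℤ) -
        ((Finset.univ.filter (fun v : G.V => vmap v = v')).card : ℤ) + 1

/-- Pushforward of a divisor along a specialization. -/
def Spec.pushDiv {G G' : WGraph} (σ : Spec G G') (D : G.V → ℤ) : G'.V → ℤ :=
  fun v' => ∑ v ∈ Finset.univ.filter (fun v => σ.vmap v = v'), D v

/-- Pushforward of a polarization along a specialization. -/
def Spec.pushPol {G G' : WGraph} (σ : Spec G G') (μ : G.V → ℚ) : G'.V → ℚ :=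
  fun v' => ∑ v ∈ Finset.univ.filter (fun v => σ.vmap v = v'), μ v

/-- The induced map on vertices of subdivisions. -/
def Spec.subdivVmap {G G' : WGraph} (σ : Spec G G') (S : Finset G.E)
    (S' : Finset G'.E) : (G.subdiv S).V → (G'.subdiv S').V := fun x =>
  match x with
  | .inl v => .inl (σ.vmap v)
  | .inr e =>
    if h : ∃ e' : {e' // e' ∈ S'}, σ.emap e'.1 = e.1 then .inr h.choose
    else .inl (σ.vmap (G.src e.1))

/-- Pushforward of a pseudo-divisor (its divisor part) along a specialization. -/
def Spec.pushSubdivDiv {G G' : WGraph} (σ : Spec G G') (S : Finset G.E)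
    (S' : Finset G'.E) (D : (G.subdiv S).V → ℤ) : (G'.subdiv S').V → ℤ := fun y =>
  ∑ x ∈ Finset.univ.filter (fun x => σ.subdivVmap S S' x = y), D x

/-- Extension by zero along the edge injection of a specialization. -/
def Spec.extendBy {G G' : WGraph} (σ : Spec G G') (x : G'.E → ℝ) : G.E → ℝ :=
  fun e => if h : ∃ e', σ.emap e' = e then x h.choose else 0

/-- Same-graph contraction of subdivisions (for `S ⊆ S'`): the vertex map.
`σb e` selects the endpoint to which the exceptional vertex of a contracted
edge `e ∈ S' \ S` is merged (`true` = target, `false` = source). -/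
def contrVmap (S S' : Finset G.E) (σb : G.E → Bool) :
    (G.subdiv S').V → (G.subdiv S).V := fun x =>
  match x with
  | .inl v => .inl v
  | .inr e =>
    if h : e.1 ∈ S then .inr ⟨e.1, h⟩
    else .inl (if σb e.1 then G.tgt e.1 else G.src e.1)

/-- Same-graph contraction of subdivisions: the edge injection. -/
def contrEmap (S S' : Finset G.E) (hSS : S ⊆ S') (σb : G.E → Bool) :
    (G.subdiv S).E → (G.subdiv S').E := fun x =>
  match x with
  | .inl e =>
    if h : e.1 ∈ S' then .inr (⟨e.1, h⟩, !σb e.1) else .inl ⟨e.1, h⟩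
  | .inr eb => .inr (⟨eb.1.1, hSS eb.1.2⟩, eb.2)

/-- Specialization of pseudo-divisors over a fixed graph. -/
def PDSpec (S' : Finset G.E) (D' : (G.subdiv S').V → ℤ) (S : Finset G.E)
    (D : (G.subdiv S).V → ℤ) : Prop :=
  S ⊆ S' ∧ ∃ σb : G.E → Bool,
    ∀ v, D v = ∑ x ∈ Finset.univ.filter (fun x => G.contrVmap S S' σb x = v), D' x

/-- Specialization of semistable root-graphs over a fixed graph: a
specialization of pseudo-divisors pushing the acyclic flow forward. -/
def RootSpec (S' : Finset G.E) (D' : (G.subdiv S').V → ℤ) (S : Finset G.E)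
    (D : (G.subdiv S).V → ℤ) : Prop :=
  ∃ hSS : S ⊆ S', ∃ σb : G.E → Bool,
    (∀ v, D v = ∑ x ∈ Finset.univ.filter (fun x => G.contrVmap S S' σb x = v), D' x) ∧
    ∀ φ' φ : _, (G.subdiv S').Acyclic φ' →
      (∀ v, 2 * D' v + (G.subdiv S').divOf φ' v = (G.subdiv S').K v) →
      (G.subdiv S).Acyclic φ →
      (∀ v, 2 * D v + (G.subdiv S).divOf φ v = (G.subdiv S).K v) →
      ∀ x, φ x = φ' (G.contrEmap S S' hSS σb x)

/-- Underlying edge of `Γ` of an edge of `Γ^S`. -/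
def underE (S : Finset G.E) : (G.subdiv S).E → G.E := fun x =>
  match x with
  | .inl e => e.1
  | .inr eb => eb.1.1

/-- A specialization of triples `(Γ, E, D) ≥ (Γ', E', D')`. -/
structure TripleSpec (G : WGraph) (S : Finset G.E) (D : (G.subdiv S).V → ℤ)
    (G' : WGraph) (S' : Finset G'.E) (D' : (G'.subdiv S').V → ℤ) where
  base : Spec G G'
  sub : Spec (G.subdiv S) (G'.subdiv S')
  vcomm : ∀ v : G.V, sub.vmap (Sum.inl v) = Sum.inl (base.vmap v)
  ecomm : ∀ x : (G'.subdiv S').E, G.underE S (sub.emap x) = base.emap (G'.underE S' x)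
  edges_sub : ∀ e' ∈ S', base.emap e' ∈ S
  push_eq : ∀ y, D' y = ∑ x ∈ Finset.univ.filter (fun x => sub.vmap x = y), D x

/-- A triple specialization is a specialization of root-graphs when it pushes
the (unique) acyclic flows forward. -/
def TripleSpec.IsRootSpec {G : WGraph} {S : Finset G.E} {D : (G.subdiv S).V → ℤ}
    {G' : WGraph} {S' : Finset G'.E} {D' : (G'.subdiv S').V → ℤ}
    (T : TripleSpec G S D G' S' D') : Prop :=
  ∀ φ φ', (G.subdiv S).Acyclic φ →
    (∀ v, 2 * D v + (G.subdiv S).divOf φ v = (G.subdiv S).K v) →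
    (G'.subdiv S').Acyclic φ' →
    (∀ v, 2 * D' v + (G'.subdiv S').divOf φ' v = (G'.subdiv S').K v) →
    ∀ x, φ' x = φ (T.sub.emap x)

/-- The cone `λ` attached to a flow: nonnegative orthant cut by the cycle
equations. -/
def lambdaSet (φ : G.E → ℤ) : Set (G.E → ℝ) :=
  {x | (∀ e, 0 ≤ x e) ∧ ∀ c : List G.OEdge, G.IsOrientedCycle c →
      ((c.map (fun oe => (G.flowVal φ oe : ℝ) * x oe.1)).sum) = 0}

/-- Its relative interior (intersection with the positive orthant). -/
def lambdaInt (φ : G.E → ℤ) : Set (G.E → ℝ) :=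
  {x | (∀ e, 0 < x e) ∧ ∀ c : List G.OEdge, G.IsOrientedCycle c →
      ((c.map (fun oe => (G.flowVal φ oe : ℝ) * x oe.1)).sum) = 0}

/-- Faces of a cone (supporting-hyperplane definition). -/
def IsFaceOf (F C : Set (G.E → ℝ)) : Prop :=
  F = C ∨ ∃ l : (G.E → ℝ) →ₗ[ℝ] ℝ, (∀ x ∈ C, 0 ≤ l x) ∧ F = C ∩ {x | l x = 0}

/-- Facets: faces of codimension one. -/
def IsFacetOf (F C : Set (G.E → ℝ)) : Prop :=
  G.IsFaceOf F C ∧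
    Module.finrank ℝ (Submodule.span ℝ F) + 1 = Module.finrank ℝ (Submodule.span ℝ C)

/-- The vector `u_V` spanning the subspace `L_E`. -/
def uVec (S : Finset G.E) (W : Finset G.V) : (G.subdiv S).E → ℝ := fun x =>
  match x with
  | .inl _ => 0
  | .inr eb =>
    if G.crossing W eb.1.1 then
      (if (if eb.2 then G.tgt eb.1.1 else G.src eb.1.1) ∈ W then 1 else -1)
    else 0

/-- The subspace `L_E ⊆ ℝ^{E(Γ^S)}`. -/
def LSub (S : Finset G.E) : Submodule ℝ ((G.subdiv S).E → ℝ) :=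
  Submodule.span ℝ {u | ∃ W : Finset G.V, (∀ e, G.crossing W e → e ∈ S) ∧ u = G.uVec S W}

/-- The diagonal map `δ_E : ℝ^{E(Γ)} → ℝ^{E(Γ^S)}`. -/
def deltaMap (S : Finset G.E) (x : G.E → ℝ) : (G.subdiv S).E → ℝ := fun e' =>
  match e' with
  | .inl e => x e.1
  | .inr eb => x eb.1.1

/-- One step of a `φ`-path avoiding the edges of `A`. -/
def phiStep (φ : G.E → ℤ) (A : Finset G.E) (a b : G.V) : Prop :=
  ∃ oe : G.OEdge, oe.1 ∉ A ∧ 0 ≤ G.flowVal φ oe ∧ G.osrc oe = a ∧ G.otgt oe = b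

/-- Reachability by `φ`-paths avoiding the edges of `A`. -/
def PhiReach (φ : G.E → ℤ) (A : Finset G.E) : G.V → G.V → Prop :=
  Relation.ReflTransGen (G.phiStep φ A)

/-- The refinement of `Γ` inserting `m e` vertices in the interior of each
edge `e`. -/
def refine (m : G.E → ℕ) : WGraph where
  V := G.V ⊕ (Σ e : G.E, Fin (m e))
  E := Σ e : G.E, Fin (m e + 1)
  src := fun x =>
    if h : (x.2 : ℕ) = 0 then .inl (G.src x.1)
    else .inr ⟨x.1, ⟨(x.2 : ℕ) - 1, by have := x.2.isLt; omega⟩⟩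
  tgt := fun x =>
    if h : (x.2 : ℕ) = m x.1 then .inl (G.tgt x.1)
    else .inr ⟨x.1, ⟨(x.2 : ℕ), by have := x.2.isLt; omega⟩⟩
  w := fun v =>
    match v with
    | .inl v => G.w v
    | .inr _ => 0

end WGraph

attribute [local instance] Classical.propDecidable

namespace WGraph.Spec

variable {G G' : WGraph} (σ : Spec G G')

theorem sum_pushDiv (D : G.V → ℤ) (W : Finset G'.V) :
    (∑ v' ∈ W, (σ.pushDiv D v' : ℚ)) =
      ∑ v ∈ Finset.univ.filter (fun v => σ.vmap v ∈ W), (D v : ℚ) := by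
  simp only [pushDiv, Int.cast_sum]
  exact Finset.sum_fiberwise_eq_sum_filter _ _ _ _

theorem sum_pushPol (μ : G.V → ℚ) (W : Finset G'.V) :
    ∑ v' ∈ W, σ.pushPol μ v' = ∑ v ∈ Finset.univ.filter (fun v => σ.vmap v ∈ W), μ v :=
  Finset.sum_fiberwise_eq_sum_filter _ _ _ _

theorem crossing_preimage_emap_iff (W : Finset G'.V) (e' : G'.E) :
    G.crossing (Finset.univ.filter (fun v => σ.vmap v ∈ W)) (σ.emap e') ↔ G'.crossing W e' := by
  simp only [crossing, Finset.mem_filter, Finset.mem_univ, true_and, σ.src_comm, σ.tgt_comm]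

/-- Contracted edges join vertices of one fiber, so only surviving edges can cross a preimage. -/
theorem mem_range_emap_of_crossing_preimage {W : Finset G'.V} {e : G.E}
    (he : G.crossing (Finset.univ.filter (fun v => σ.vmap v ∈ W)) e) :
    e ∈ Set.range σ.emap := by
  by_contra hne
  have hcontr := σ.contract_eq e (by simpa using hne)
  simp [crossing, hcontr] at he

theorem delta_preimage (W : Finset G'.V) :
    G.delta (Finset.univ.filter (fun v => σ.vmap v ∈ W)) = G'.delta W := by
  unfold delta
  symm
  rw [← Finset.card_map ⟨σ.emap, σ.emap_inj⟩]
  congr 1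
  ext e
  simp only [Finset.mem_filter, Finset.mem_univ, true_and, Finset.mem_map,
    Function.Embedding.coeFn_mk]
  constructor
  · rintro ⟨e', he', rfl⟩
    exact (σ.crossing_preimage_emap_iff W e').2 he'
  · intro he
    obtain ⟨e', rfl⟩ := σ.mem_range_emap_of_crossing_preimage he
    exact ⟨e', (σ.crossing_preimage_emap_iff W e').1 he, rfl⟩

theorem beta_push (μ : G.V → ℚ) (D : G.V → ℤ) (W : Finset G'.V) :
    G'.beta (σ.pushPol μ) (σ.pushDiv D) W =
      G.beta μ D (Finset.univ.filter (fun v => σ.vmap v ∈ W)) := by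
  rw [beta, beta, sum_pushDiv, sum_pushPol, delta_preimage]

theorem preimage_ne_univ {W : Finset G'.V} (hW : W ≠ Finset.univ) :
    Finset.univ.filter (fun v => σ.vmap v ∈ W) ≠ Finset.univ := by
  intro h
  refine hW (Finset.eq_univ_iff_forall.2 fun v' => ?_)
  obtain ⟨v, rfl⟩ := σ.vmap_surj v'
  simpa using Finset.eq_univ_iff_forall.1 h v

theorem semistable_push {μ : G.V → ℚ} {D : G.V → ℤ} (hD : G.Semistable μ D) :
    G'.Semistable (σ.pushPol μ) (σ.pushDiv D) := fun W hW => by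
  rw [σ.beta_push]
  exact hD _ (σ.preimage_ne_univ hW)

end WGraph.Spec

theorem stmt0_general (G G' : WGraph) (σ : WGraph.Spec G G') (D : G.V → ℤ) (μ : G.V → ℚ) :
    (∀ W : Finset G'.V,
      G'.beta (σ.pushPol μ) (σ.pushDiv D) W =
        G.beta μ D (Finset.univ.filter (fun v => σ.vmap v ∈ W))) ∧
    (G.Semistable μ D → G'.Semistable (σ.pushPol μ) (σ.pushDiv D)) :=
  ⟨σ.beta_push μ D, σ.semistable_push⟩

/-- For a specialization `ι : Γ → Γ'` of graphs, a divisor `D`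
and a polarization `μ` of degree `d` on `Γ`, one has
`β_{ι_*D}(W) = β_D(ι⁻¹(W))` for every `W ⊆ V(Γ')`; in particular if `D` is
`μ`-semistable then `ι_*D` is `ι_*μ`-semistable. -/
theorem stmt0 (G G' : WGraph) (σ : WGraph.Spec G G') (D : G.V → ℤ) (μ : G.V → ℚ)
    (d : ℤ) (hdeg : ∑ v : G.V, μ v = (d : ℚ)) :
    (∀ W : Finset G'.V,
      G'.beta (σ.pushPol μ) (σ.pushDiv D) W =
        G.beta μ D (Finset.univ.filter (fun v => σ.vmap v ∈ W))) ∧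
    (G.Semistable μ D → G'.Semistable (σ.pushPol μ) (σ.pushDiv D)) :=
  stmt0_general G G' σ D μ
end
end

section
/- Let Γ be a connected weighted graph of genus g, μ the canonical polarization of degree g-1 (μ(v) = (2w(v) - 2 + deg(v))/2), D a divisor on Γ, and φ an acyclic flow on Γ with 2D + Div(φ) = K_Γ. If D is μ-stable (β_D(W) > 0 for every proper nonempty W ⊂ V(Γ)), then φ = 0. Conversely, if φ = 0, then D is μ-stable. -/
/-! A common framework for weighted multigraphs, divisors, flows,
subdivisions, pseudo-divisors and specializations, following
"The moduli space of quasistable spin curves". -/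

noncomputable section

namespace WGraph

attribute [local instance] Classical.propDecidable

variable (G : WGraph)

end WGraph

attribute [local instance] Classical.propDecidable

/-! Since `2D = K_Γ - Div(φ)`, we have `β_D(W) = (δ_W - ∑_{v ∈ W} Div(φ)(v)) / 2`, and the sum is
the net flow into `W`. If `φ = 0`, then `β_D(W) = δ_W / 2 > 0` by connectivity. If `φ ≠ 0`, take
an edge of positive flow and let `W` be the set of vertices reachable from its head along edges of
nonnegative flow. Acyclicity keeps its tail out of `W`, and every edge between `W` and its
complement carries at least one unit of flow into `W`, so `β_D(W) ≤ 0`. -/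

namespace WGraph

variable {G : WGraph} {φ : G.E → ℤ}

lemma osrc_eq_or_eq_otgt_of_fst_eq {x y : G.OEdge} (h : x.1 = y.1) :
    G.osrc x = G.osrc y ∨ G.osrc x = G.otgt y := by
  obtain ⟨e, bx⟩ := x
  obtain ⟨_, by'⟩ := y
  cases h
  cases bx <;> cases by' <;> simp [osrc, otgt]

lemma flowVal_eq_neg_of_fst_eq {x y : G.OEdge} (h : x.1 = y.1) (hne : x ≠ y) :
    G.flowVal φ y = -G.flowVal φ x := by
  obtain ⟨e, bx⟩ := x
  obtain ⟨_, by'⟩ := y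
  cases h
  cases bx <;> cases by' <;> simp_all [flowVal]

variable (G φ) in
def IsWalk : List G.OEdge → G.V → G.V → Prop
  | [], a, b => a = b
  | oe :: l, a, b => 0 ≤ G.flowVal φ oe ∧ G.osrc oe = a ∧ IsWalk l (G.otgt oe) b

namespace IsWalk

lemma flowVal_nonneg : ∀ {l : List G.OEdge} {a b : G.V}, G.IsWalk φ l a b →
    ∀ oe ∈ l, 0 ≤ G.flowVal φ oe
  | _ :: _, _, _, ⟨hx, _, _⟩, _, .head _ => hx
  | _ :: _, _, _, ⟨_, _, hl⟩, oe, .tail _ h => hl.flowVal_nonneg oe h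

lemma cons_map_otgt : ∀ {l : List G.OEdge} {a b : G.V}, G.IsWalk φ l a b →
    a :: l.map G.otgt = l.map G.osrc ++ [b]
  | [], _, _, rfl => rfl
  | _ :: _, _, _, ⟨_, rfl, hl⟩ => by simp [hl.cons_map_otgt]

lemma nodup_map_fst : ∀ {l : List G.OEdge} {a b : G.V}, G.IsWalk φ l a b →
    (a :: l.map G.otgt).Nodup → (l.map Prod.fst).Nodup
  | [], _, _, _, _ => List.nodup_nil
  | x :: l, _, _, ⟨_, rfl, hl⟩, hnd => by
    rw [List.map_cons, List.nodup_cons] at hnd ⊢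
    refine ⟨fun hx => ?_, hl.nodup_map_fst hnd.2⟩
    obtain ⟨y, hy, hxy⟩ := List.mem_map.mp hx
    apply hnd.1
    rcases osrc_eq_or_eq_otgt_of_fst_eq hxy.symm with h | h
    · rw [h, hl.cons_map_otgt]
      exact List.mem_append_left _ (List.mem_map_of_mem hy)
    · rw [h]
      exact List.mem_cons_of_mem _ (List.mem_map_of_mem hy)

lemma exists_suffix : ∀ {l : List G.OEdge} {a b c : G.V}, G.IsWalk φ l a b →
    (a :: l.map G.otgt).Nodup → c ∈ a :: l.map G.otgt →
    ∃ l', G.IsWalk φ l' c b ∧ (c :: l'.map G.otgt).Nodup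
  | l, _, _, _, hl, hnd, .head _ => ⟨l, hl, hnd⟩
  | x :: _, _, _, _, ⟨_, _, hl⟩, hnd, .tail _ hc =>
    hl.exists_suffix (List.nodup_cons.mp hnd).2 hc

lemma exists_nodup : ∀ {l : List G.OEdge} {a b : G.V}, G.IsWalk φ l a b →
    ∃ l', G.IsWalk φ l' a b ∧ (a :: l'.map G.otgt).Nodup
  | [], _, _, h => ⟨[], h, List.nodup_singleton _⟩
  | x :: _, _, _, ⟨hx, rfl, hl⟩ => by
    obtain ⟨l', hl', hnd⟩ := hl.exists_nodup
    by_cases ha : G.osrc x ∈ G.otgt x :: l'.map G.otgt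
    · exact hl'.exists_suffix hnd ha
    · exact ⟨x :: l', ⟨hx, rfl, hl'⟩, List.nodup_cons.mpr ⟨ha, hnd⟩⟩

end IsWalk

lemma PhiReach.exists_isWalk {a b : G.V} (h : G.PhiReach φ ∅ a b) : ∃ l, G.IsWalk φ l a b := by
  induction h using Relation.ReflTransGen.head_induction_on with
  | refl => exact ⟨[], rfl⟩
  | head hstep _ ih =>
    obtain ⟨l, hl⟩ := ih
    obtain ⟨oe, _, hoe, rfl, rfl⟩ := hstep
    exact ⟨oe :: l, hoe, rfl, hl⟩

lemma isOrientedCycle_of_map_otgt_eq_rotate {c : List G.OEdge} (hc : c ≠ [])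
    (hE : (c.map Prod.fst).Nodup) (hV : (c.map G.osrc).Nodup)
    (hcyc : c.map G.otgt = (c.map G.osrc).rotate 1) : G.IsOrientedCycle c := by
  refine ⟨hc, hE, hV, fun i => ?_⟩
  have hi : (i : ℕ) < (c.map G.otgt).length := by simp
  calc G.otgt (c.get i) = (c.map G.otgt)[i] := by simp
    _ = ((c.map G.osrc).rotate 1)[i]'(by simp) := List.getElem_of_eq hcyc hi
    _ = _ := by simp [List.getElem_rotate]

/-- A simple walk of nonnegative flow from the head of `oe` back to its tail, preceded by `oe`,
is an oriented cycle. -/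
lemma Acyclic.not_phiReach {oe : G.OEdge} (hφ : G.Acyclic φ) (hpos : 0 < G.flowVal φ oe) :
    ¬G.PhiReach φ ∅ (G.otgt oe) (G.osrc oe) := by
  intro hreach
  obtain ⟨l₀, hl₀⟩ := hreach.exists_isWalk
  obtain ⟨l, hl, hnd⟩ := hl₀.exists_nodup
  have hverts := hl.cons_map_otgt
  have hnd' : (G.osrc oe :: l.map G.osrc).Nodup := by
    rw [← List.nodup_rotate (n := 1), List.rotate_cons_succ, List.rotate_zero, ← hverts]
    exact hnd
  have hoe : oe.1 ∉ l.map Prod.fst := by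
    intro hmem
    obtain ⟨y, hy, hyoe⟩ := List.mem_map.mp hmem
    by_cases hyeq : oe = y
    · subst hyeq
      exact (List.nodup_cons.mp hnd').1 (List.mem_map_of_mem hy)
    · have hneg := flowVal_eq_neg_of_fst_eq (φ := φ) hyoe.symm hyeq
      have hnonneg := hl.flowVal_nonneg y hy
      omega
  refine hφ ⟨oe :: l, isOrientedCycle_of_map_otgt_eq_rotate (List.cons_ne_nil _ _) ?_ hnd' ?_,
    ?_, oe, List.mem_cons_self, hpos⟩
  · exact List.nodup_cons.mpr ⟨hoe, hl.nodup_map_fst hnd⟩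
  · simp [hverts]
  · rintro x (_ | ⟨_, hx⟩)
    · exact hpos.le
    · exact hl.flowVal_nonneg x hx

lemma exists_flowVal_pos {e : G.E} (he : φ e ≠ 0) : ∃ oe : G.OEdge, 0 < G.flowVal φ oe := by
  rcases he.lt_or_gt with h | h
  · exact ⟨(e, false), by simpa [flowVal] using h⟩
  · exact ⟨(e, true), by simpa [flowVal] using h⟩

lemma Acyclic.exists_closed {e : G.E} (hφ : G.Acyclic φ) (he : φ e ≠ 0) :
    ∃ W : Finset G.V, W ≠ Finset.univ ∧ W.Nonempty ∧
      ∀ oe : G.OEdge, G.osrc oe ∈ W → 0 ≤ G.flowVal φ oe → G.otgt oe ∈ W := by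
  obtain ⟨oe₀, hpos⟩ := exists_flowVal_pos he
  refine ⟨Finset.univ.filter (G.PhiReach φ ∅ (G.otgt oe₀)), fun hW => ?_,
    ⟨G.otgt oe₀, Finset.mem_filter.mpr ⟨Finset.mem_univ _, .refl⟩⟩, fun oe hsrc hoe => ?_⟩
  · refine hφ.not_phiReach hpos ?_
    simpa using Finset.eq_univ_iff_forall.mp hW (G.osrc oe₀)
  · simp only [Finset.mem_filter, Finset.mem_univ, true_and] at hsrc ⊢
    exact hsrc.tail ⟨oe, Finset.notMem_empty _, hoe, rfl, rfl⟩

lemma exists_crossing_of_reachVia {A : Finset G.E} {W : Finset G.V} {u z : G.V}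
    (h : G.ReachVia A u z) (hu : u ∈ W) (hz : z ∉ W) : ∃ e ∈ A, G.crossing W e := by
  induction h with
  | refl => exact absurd hu hz
  | @tail b c _ hbc ih =>
    by_cases hb : b ∈ W
    · obtain ⟨e, he, ⟨rfl, rfl⟩ | ⟨rfl, rfl⟩⟩ := hbc
      · exact ⟨e, he, by simp [crossing, hb, hz]⟩
      · exact ⟨e, he, by simp [crossing, hb, hz]⟩
    · exact ih hb

lemma Connected.delta_pos (hG : G.Connected) {W : Finset G.V} (hW : W ≠ Finset.univ)
    (hne : W.Nonempty) : 0 < G.delta W := by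
  obtain ⟨u, hu⟩ := hne
  obtain ⟨z, hz⟩ : ∃ z, z ∉ W := by simpa [Finset.eq_univ_iff_forall] using hW
  obtain ⟨e, -, he⟩ := exists_crossing_of_reachVia (hG.2 u z) hu hz
  exact Finset.card_pos.mpr ⟨e, by simpa using he⟩

lemma sum_divOf (W : Finset G.V) :
    ∑ v ∈ W, G.divOf φ v =
      ∑ e, ((if G.tgt e ∈ W then φ e else 0) - if G.src e ∈ W then φ e else 0) := by
  simp only [divOf, Finset.sum_sub_distrib]
  rw [Finset.sum_comm, Finset.sum_comm (s := W)]
  simp [Finset.sum_ite_eq]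

lemma delta_eq_sum (W : Finset G.V) :
    (G.delta W : ℤ) = ∑ e, if G.crossing W e then 1 else 0 := by
  simp only [delta, Finset.card_filter, Nat.cast_sum, Nat.cast_ite, Nat.cast_one, Nat.cast_zero]

lemma delta_le_sum_divOf {W : Finset G.V}
    (hW : ∀ oe : G.OEdge, G.osrc oe ∈ W → 0 ≤ G.flowVal φ oe → G.otgt oe ∈ W) :
    (G.delta W : ℤ) ≤ ∑ v ∈ W, G.divOf φ v := by
  rw [delta_eq_sum, sum_divOf]
  refine Finset.sum_le_sum fun e _ => ?_
  by_cases hs : G.src e ∈ W <;> by_cases ht : G.tgt e ∈ W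
  · simp [crossing, hs, ht]
  · have hφe := mt (hW (e, true) hs) ht
    simp only [flowVal, if_true] at hφe
    rw [if_pos (by simp [crossing, hs, ht]), if_pos hs, if_neg ht]
    omega
  · have hφe := mt (hW (e, false) ht) hs
    simp only [flowVal, Bool.false_eq_true, if_false] at hφe
    rw [if_pos (by simp [crossing, hs, ht]), if_pos ht, if_neg hs]
    omega
  · simp [crossing, hs, ht]

lemma beta_canPol_pos_iff {D : G.V → ℤ} (heq : ∀ v, 2 * D v + G.divOf φ v = G.K v)
    (W : Finset G.V) : 0 < G.beta G.canPol D W ↔ ∑ v ∈ W, G.divOf φ v < G.delta W := by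
  have hD : ∀ v ∈ W, (D v : ℚ) - G.canPol v = -(G.divOf φ v : ℚ) / 2 := fun v _ => by
    simp only [canPol, ← heq v]
    push_cast
    ring
  have hβ : G.beta G.canPol D W = (((G.delta W : ℤ) - ∑ v ∈ W, G.divOf φ v : ℤ) : ℚ) / 2 := by
    rw [beta, ← Finset.sum_sub_distrib, Finset.sum_congr rfl hD, ← Finset.sum_div,
      Finset.sum_neg_distrib]
    push_cast
    ring
  rw [hβ, div_pos_iff_of_pos_right two_pos, Int.cast_pos, sub_pos]

end WGraph

/-- On a connected weighted graph with the canonical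
polarization of degree `g-1`, if `φ` is an acyclic flow with
`2D + Div(φ) = K_Γ`, then `D` is stable if and only if `φ = 0`. -/
theorem stmt1 (G : WGraph) (hconn : G.Connected) (D : G.V → ℤ) (φ : G.E → ℤ)
    (hacyc : G.Acyclic φ) (heq : ∀ v, 2 * D v + G.divOf φ v = G.K v) :
    G.Stable G.canPol D ↔ ∀ e, φ e = 0 := by
  simp only [WGraph.Stable, WGraph.beta_canPol_pos_iff heq]
  constructor
  · intro hst
    by_contra! ⟨e, he⟩
    obtain ⟨W, hW, hne, hclosed⟩ := hacyc.exists_closed he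
    exact (hst W hW hne).not_ge (WGraph.delta_le_sum_divOf hclosed)
  · intro hφ W hW hne
    have hzero : ∑ v ∈ W, G.divOf φ v = 0 := by simp [WGraph.sum_divOf, hφ]
    rw [hzero]
    exact_mod_cast hconn.delta_pos hW hne
end
end
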